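/- Let A and B be NFQ groups such that B is nontrivial and A has trivial center, let G = A * B be their free product, and let a ∈ A. Then the mapping torus G_{τ_a} is isomorphic as a group to G_{id} (equivalently, to G × ℤ) if and only if a = 1 in A. -/

import Mathlib

/-!
An isomorphism `G_τ ≃* G_id` of mapping tori of `G = A ∗ B` maps the fibre `G` onto the fibre
`G`, since the NFQ group `G` has no nontrivial homomorphism to `ℤ`. Comparing how the generator
of `ℤ` acts by conjugation on the two fibres shows that `τ` is inner, say conjugation by `v`.
As `τ` fixes `B` pointwise, `v` centralises a nontrivial element of `B`; reduced words in the free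
product show that `v` then lies in `B`. Projecting `A ∗ B → A` kills `v`, so conjugation by `a`
is trivial on `A`: `a` is central, hence `a = 1`.
-/

open Monoid

/-- A group is NFQ ('no finite quotients') if it has no proper subgroup of finite index. -/
def NFQ (G : Type*) [Group G] : Prop :=
  ∀ H : Subgroup G, H.index ≠ 0 → H = ⊤

/-- The mapping torus `G ⋊_φ ℤ` of an automorphism `φ` of `G`: the semidirect product
in which `n : ℤ` acts on `G` by `φ ^ n`. -/
abbrev MappingTorus (G : Type*) [Group G] (φ : MulAut G) : Type _ :=
  SemidirectProduct G (Multiplicative ℤ) (zpowersHom (MulAut G) φ)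

namespace NFQ

variable {G : Type*} [Group G]

theorem eq_one_of_finite (hG : NFQ G) {Q : Type*} [Group Q] [Finite Q] (f : G →* Q) : f = 1 := by
  have hker : f.ker = ⊤ := hG _ (Subgroup.finiteIndex_ker f).index_ne_zero
  ext x
  exact (hker ▸ Subgroup.mem_top x : x ∈ f.ker)

theorem eq_one_of_int (hG : NFQ G) (f : G →* Multiplicative ℤ) : f = 1 := by
  ext x
  set m := (f x).toAdd
  let n := m.natAbs + 1
  have hmod : (m : ZMod n) = 0 :=
    congrArg Multiplicative.toAdd <|
      DFunLike.congr_fun (hG.eq_one_of_finite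
        ((Int.castAddHom (ZMod n)).toMultiplicative.comp f)) x
  exact Int.eq_zero_of_dvd_of_natAbs_lt_natAbs
    ((ZMod.intCast_zmod_eq_zero_iff_dvd m n).mp hmod) (by rw [Int.natAbs_natCast]; omega)

theorem coprod {A B : Type*} [Group A] [Group B] (hA : NFQ A) (hB : NFQ B) :
    NFQ (Coprod A B) := by
  intro H hH
  have : H.FiniteIndex := ⟨hH⟩
  have hmk : QuotientGroup.mk' H.normalCore = 1 :=
    Coprod.hom_ext (hA.eq_one_of_finite _) (hB.eq_one_of_finite _)
  have hcore : H.normalCore = ⊤ := by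
    rw [← QuotientGroup.ker_mk' H.normalCore, hmk, MonoidHom.ker_one]
  exact top_le_iff.mp (hcore ▸ H.normalCore_le)

end NFQ

namespace SemidirectProduct

variable {N N' G G' : Type*} [Group N] [Group N'] [Group G] [Group G']
  {φ : G →* MulAut N} {ψ : G' →* MulAut N'}

theorem inl_left_of_right_eq_one {x : N ⋊[φ] G} (h : x.right = 1) : inl x.left = x := by
  simpa [h] using inl_left_mul_inr_right x

def restrictLeft (Φ : N ⋊[φ] G ≃* N' ⋊[ψ] G') (h : ∀ n, (Φ (inl n)).right = 1)
    (h' : ∀ n, (Φ.symm (inl n)).right = 1) : N ≃* N' where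
  toFun n := (Φ (inl n)).left
  invFun n := (Φ.symm (inl n)).left
  left_inv n := by simp [inl_left_of_right_eq_one (h n)]
  right_inv n := by simp [inl_left_of_right_eq_one (h' n)]
  map_mul' m n := by simp [mul_left, h]

theorem inl_restrictLeft (Φ : N ⋊[φ] G ≃* N' ⋊[ψ] G') (h : ∀ n, (Φ (inl n)).right = 1)
    (h' : ∀ n, (Φ.symm (inl n)).right = 1) (n : N) :
    inl (restrictLeft Φ h h' n) = Φ (inl n) :=
  inl_left_of_right_eq_one (h n)

end SemidirectProduct

namespace MappingTorus

open SemidirectProduct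

variable {G : Type*} [Group G]

theorem conj_inl (φ : MulAut G) (g : G) :
    (inr (.ofAdd 1) * inl g * (inr (.ofAdd 1))⁻¹ : MappingTorus G φ) = inl (φ g) := by
  rw [← map_inv, ← inl_aut]
  simp

theorem conj_inl_one (x : MappingTorus G 1) (g : G) :
    x * inl g * x⁻¹ = inl (x.left * g * x.left⁻¹) := by
  ext <;> simp [mul_left, inv_left, mul_right]

theorem right_apply_inl_eq_one {φ ψ : MulAut G} (hG : NFQ G) (f : MappingTorus G φ →* MappingTorus G ψ)
    (g : G) : (f (inl g)).right = 1 :=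
  DFunLike.congr_fun (hG.eq_one_of_int (rightHom.comp (f.comp inl))) g

theorem exists_eq_conj_of_mulEquiv {φ : MulAut G} (hG : NFQ G)
    (Φ : MappingTorus G φ ≃* MappingTorus G 1) : ∃ v : G, φ = MulAut.conj v := by
  let α := restrictLeft Φ (right_apply_inl_eq_one hG Φ.toMonoidHom) (right_apply_inl_eq_one hG Φ.symm.toMonoidHom)
  have hα : ∀ g, inl (α g) = Φ (inl g) := inl_restrictLeft _ _ _
  let w := (Φ (inr (.ofAdd 1))).left
  have hconj (g : G) : α (φ g) = w * α g * w⁻¹ := by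
    apply inl_injective (φ := zpowersHom (MulAut G) 1)
    rw [hα, ← conj_inl, map_mul, map_mul, map_inv, ← hα, conj_inl_one]
  refine ⟨α.symm w, MulEquiv.ext fun g => α.injective ?_⟩
  simp [hconj]

end MappingTorus

namespace Monoid.CoprodI

variable {ι : Type*} {G : ι → Type*} [∀ i, Group (G i)] {j : ι} {b : G j}

open Word

theorem NeWord.prod_ne_of {i k : ι} (w : NeWord G i k) (hij : i ≠ j) (hb : b ≠ 1) :
    w.prod ≠ of b := by
  classical
  intro h
  have hempty : (empty : Word G).fstIdx ≠ some j := by simp [fstIdx, empty]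
  have hw : w.toWord = cons b empty hempty hb := by
    apply Word.equiv.symm.injective
    change w.prod = Word.prod _
    rw [h, prod_cons, prod_empty, mul_one]
  have hfst : w.toWord.fstIdx = some i := by
    simp [fstIdx, NeWord.toWord, NeWord.toList_head?]
  rw [hw, fstIdx_cons] at hfst
  exact hij (Option.some.inj hfst).symm

theorem Word.exists_neWord_prod_eq_conj (hb : b ≠ 1) (W : Word G) (hW : W ≠ empty) :
    ∃ (k : ι) (w : NeWord G k k), W.fstIdx = some k ∧ w.prod = W.prod * of b * W.prod⁻¹ := by
  induction W using Word.consRecOn with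
  | empty => exact absurd rfl hW
  | cons i m W' hW' hm ih =>
    suffices ∃ w : NeWord G i i, w.prod = of m * (W'.prod * of b * W'.prod⁻¹) * (of m)⁻¹ by
      obtain ⟨w, hw⟩ := this
      exact ⟨i, w, fstIdx_cons _ _ _ _, by rw [hw, prod_cons]; group⟩
    have hm' : m⁻¹ ≠ 1 := inv_ne_one.mpr hm
    by_cases hW'e : W' = empty
    · subst hW'e
      by_cases hij : i = j
      · subst hij
        exact ⟨.singleton (m * b * m⁻¹) (by simpa using hb), by simp⟩
      · exact ⟨.append (.singleton m hm) hij (.append (.singleton b hb) (Ne.symm hij)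
          (.singleton m⁻¹ hm')), by simp [mul_assoc]⟩
    · obtain ⟨k, w', hk, hw'⟩ := ih hW'e
      have hik : i ≠ k := fun h => hW' (h ▸ hk)
      exact ⟨.append (.singleton m hm) hik (.append w' hik.symm (.singleton m⁻¹ hm')),
        by simp [hw', mul_assoc]⟩

theorem exists_eq_of_of_conj_eq_of (hb : b ≠ 1) {w : CoprodI G} {b' : G j}
    (h : w * of b * w⁻¹ = of b') : ∃ c : G j, w = of c := by
  classical
  obtain ⟨W, rfl⟩ : ∃ W : Word G, W.prod = w := ⟨Word.equiv w, Word.equiv.symm_apply_apply w⟩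
  -- Letters of `G j` at the front of `W` are absorbed into `b'`; a first letter from another
  -- summand would make the conjugate a reduced word that does not start in `G j`.
  induction W using Word.consRecOn generalizing b' with
  | empty => exact ⟨1, by rw [prod_empty, map_one]⟩
  | cons i m W' hW' hm ih =>
    by_cases hij : i = j
    · subst hij
      obtain ⟨c, hc⟩ := ih (b' := m⁻¹ * b' * m)
        (by rw [map_mul, map_mul, map_inv, ← h, prod_cons]; group)
      exact ⟨m * c, by rw [prod_cons, hc, map_mul]⟩
    · have hb' : b' ≠ 1 := by
        rintro rfl
        rw [map_one, mul_inv_eq_one, mul_eq_left] at h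
        exact hb ((map_eq_one_iff _ (of_injective j)).mp h)
      have hne : cons m W' hW' hm ≠ empty := fun he => by
        simpa [he, fstIdx, empty] using fstIdx_cons m W' hW' hm
      obtain ⟨k, nw, hk, hnw⟩ := Word.exists_neWord_prod_eq_conj hb _ hne
      obtain rfl : i = k := Option.some.inj ((fstIdx_cons _ _ _ _).symm.trans hk)
      exact absurd (hnw.trans h) (nw.prod_ne_of hij hb')

end Monoid.CoprodI

namespace Monoid.Coprod

universe u v

/-- The summands of `A ∗ B` as a `Bool`-indexed family in one universe, to compare `A ∗ B`
with `CoprodI (summand A B)`. -/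
def summand (A : Type u) (B : Type v) : Bool → Type (max u v)
  | true => ULift A
  | false => ULift B

variable {A : Type u} {B : Type v} [Group A] [Group B]

instance : ∀ i, Group (summand A B i)
  | true => inferInstanceAs (Group (ULift A))
  | false => inferInstanceAs (Group (ULift B))

def toCoprodI : A ∗ B →* CoprodI (summand A B) :=
  lift ((CoprodI.of (i := true)).comp MulEquiv.ulift.symm.toMonoidHom)
    ((CoprodI.of (i := false)).comp MulEquiv.ulift.symm.toMonoidHom)

def ofCoprodI : CoprodI (summand A B) →* A ∗ B :=
  CoprodI.lift fun
    | true => inl.comp MulEquiv.ulift.toMonoidHom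
    | false => inr.comp MulEquiv.ulift.toMonoidHom

theorem ofCoprodI_toCoprodI (x : A ∗ B) : ofCoprodI (toCoprodI x) = x :=
  DFunLike.congr_fun (hom_ext rfl rfl : ofCoprodI.comp toCoprodI = .id (A ∗ B)) x

theorem exists_eq_inr_of_commute {v : A ∗ B} {b : B} (hb : b ≠ 1) (h : Commute v (inr b)) :
    ∃ c : B, v = inr c := by
  let b' : summand A B false := ULift.up b
  have hb' : b' ≠ 1 := fun h => hb (congrArg ULift.down h)
  have hof : CoprodI.of b' = toCoprodI (inr b) := rfl
  obtain ⟨c, hc⟩ := CoprodI.exists_eq_of_of_conj_eq_of hb' (w := toCoprodI v) (b' := b')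
    (by rw [mul_inv_eq_iff_eq_mul, hof, ← map_mul, h.eq, map_mul])
  exact ⟨c.down, by rw [← ofCoprodI_toCoprodI v, hc]; rfl⟩

end Monoid.Coprod

/-- Let `A` and `B` be NFQ groups with `B` nontrivial and `A` of trivial center,
`G = A * B`, `a ∈ A`, and let `τ_a` be the automorphism of `G` with `τ_a(x) = a⁻¹ x a`
for `x ∈ A` and `τ_a(y) = y` for `y ∈ B`. Then the mapping torus `G_{τ_a}` is isomorphic
to `G_{id}` if and only if `a = 1`. -/
theorem mappingTorus_tau_iso_iff (A B : Type*) [Group A] [Group B] [Nontrivial B]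
    (hA : NFQ A) (hB : NFQ B) (hZ : Subgroup.center A = ⊥) (a : A)
    (τ : MulAut (Coprod A B))
    (hτl : ∀ x : A, τ (Coprod.inl x) = Coprod.inl (a⁻¹ * x * a))
    (hτr : ∀ y : B, τ (Coprod.inr y) = Coprod.inr y) :
    Nonempty (MappingTorus (Coprod A B) τ ≃* MappingTorus (Coprod A B) 1) ↔ a = 1 := by
  constructor
  · rintro ⟨Φ⟩
    obtain ⟨v, rfl⟩ := MappingTorus.exists_eq_conj_of_mulEquiv (hA.coprod hB) Φ
    obtain ⟨b, hb⟩ := exists_ne (1 : B)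
    obtain ⟨c, rfl⟩ : ∃ c, v = Coprod.inr c := by
      refine Coprod.exists_eq_inr_of_commute hb (?_ : v * _ = _ * v)
      simpa [mul_inv_eq_iff_eq_mul] using hτr b
    have hconj (x : A) : a⁻¹ * x * a = x := by
      simpa using (congrArg Coprod.fst (hτl x)).symm
    rw [← Subgroup.mem_bot, ← hZ, Subgroup.mem_center_iff]
    intro x
    rw [← inv_mul_eq_iff_eq_mul, ← mul_assoc, hconj]
  · rintro rfl
    have hτ : τ = 1 := MulEquiv.toMonoidHom_injective <|
      Coprod.hom_ext (by ext x; simp [hτl]) (by ext y; simp [hτr])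
    exact hτ ▸ ⟨MulEquiv.refl _⟩
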